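/- Let B be a positive integer, a ∈ ℝ^B with a ≠ 0, and S ⊂ ℝ^B with |S| = B. If S spans (i.e., its affine span equals) the hyperplane {x ∈ ℝ^B : aᵀx − 1 = 0}, then for every ε > 0 the set S is shattered by the class of open halfspaces { H_{b,−1} : b ∈ ℝ^B, b ≠ 0, ‖b − a‖_∞ < ε }. -/
import Mathlib


open Matrix

/-- A class `C` of subsets of `α` shatters a set `X` if every subset of `X`
is cut out of `X` by some member of `C`. -/
def Shatters {α : Type*} (C : Set (Set α)) (X : Set α) : Prop :=
  ∀ Y ⊆ X, ∃ B ∈ C, Y = X ∩ B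

/-- The open halfspace `H_{a,c} = {x ∈ ℝ^B : aᵀx + c < 0}`. -/
def Halfspace {B : ℕ} (a : Fin B → ℝ) (c : ℝ) : Set (Fin B → ℝ) :=
  {x | a ⬝ᵥ x + c < 0}

/-- If `S ⊆ ℝ^B` has `B` elements and spans the hyperplane
`{x : aᵀx - 1 = 0}` (for `a ≠ 0`), then for every `ε > 0`, `S` is shattered by
the class of open halfspaces `H_{b,-1}` with `b ≠ 0` and `‖b - a‖_∞ < ε`.
(Here the norm on `Fin B → ℝ` is the sup norm.) -/
theorem shatters_of_spans_hyperplane (B : ℕ) (hB : 0 < B)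
    (a : Fin B → ℝ) (ha : a ≠ 0)
    (S : Finset (Fin B → ℝ)) (hcard : S.card = B)
    (hspan : (affineSpan ℝ (S : Set (Fin B → ℝ)) : Set (Fin B → ℝ)) =
      {x | a ⬝ᵥ x - 1 = 0}) :
    ∀ ε > 0, Shatters
      {H : Set (Fin B → ℝ) | ∃ b : Fin B → ℝ, b ≠ 0 ∧ ‖b - a‖ < ε ∧ H = Halfspace b (-1)}
      (S : Set (Fin B → ℝ)) := by
  classical
  intro ε hε Y hY
  -- every element of S lies on the hyperplane
  have hS1 : ∀ s ∈ S, a ⬝ᵥ s = 1 := by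
    intro s hs
    have : s ∈ (affineSpan ℝ (S : Set (Fin B → ℝ)) : Set (Fin B → ℝ)) :=
      subset_affineSpan ℝ _ hs
    rw [hspan] at this
    have : a ⬝ᵥ s - 1 = 0 := this
    linarith
  -- pick a point on the hyperplane
  obtain ⟨i₀, hi₀⟩ : ∃ i, a i ≠ 0 := by
    by_contra h
    push_neg at h
    exact ha (funext h)
  set x₀ : Fin B → ℝ := (a i₀)⁻¹ • (Pi.single i₀ 1 : Fin B → ℝ) with hx₀def
  have hx₀ : a ⬝ᵥ x₀ = 1 := by
    simp [hx₀def, dotProduct_smul, dotProduct_single, hi₀]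
  have hhyp : ∀ x : Fin B → ℝ, a ⬝ᵥ x = 1 →
      x ∈ Submodule.span ℝ (S : Set (Fin B → ℝ)) := by
    intro x hx
    have : x ∈ (affineSpan ℝ (S : Set (Fin B → ℝ)) : Set (Fin B → ℝ)) := by
      rw [hspan]; simp [hx]
    exact affineSpan_subset_span this
  -- S spans all of ℝ^B linearly
  have hspanTop : Submodule.span ℝ (S : Set (Fin B → ℝ)) = ⊤ := by
    rw [Submodule.eq_top_iff']
    intro x
    have hk : a ⬝ᵥ (x₀ + (x - (a ⬝ᵥ x) • x₀)) = 1 := by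
      simp [dotProduct_add, dotProduct_sub, dotProduct_smul, hx₀]
    have h1 : x₀ + (x - (a ⬝ᵥ x) • x₀) ∈ Submodule.span ℝ (S : Set (Fin B → ℝ)) :=
      hhyp _ hk
    have h2 : x₀ ∈ Submodule.span ℝ (S : Set (Fin B → ℝ)) := hhyp _ hx₀
    have : x = (x₀ + (x - (a ⬝ᵥ x) • x₀)) - x₀ + (a ⬝ᵥ x) • x₀ := by ring_nf
    rw [this]
    exact Submodule.add_mem _ (Submodule.sub_mem _ h1 h2) (Submodule.smul_mem _ _ h2)
  -- enumerate S
  set e : Fin B ≃ {x // x ∈ S} := (S.equivFinOfCardEq hcard).symm with he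
  set g : Fin B → (Fin B → ℝ) := fun i => (e i : Fin B → ℝ) with hg
  have hgS : ∀ i, g i ∈ S := fun i => (e i).2
  have hsurj : ∀ s ∈ S, ∃ i, g i = s := by
    intro s hs
    exact ⟨e.symm ⟨s, hs⟩, by simp [hg]⟩
  -- the linear map b ↦ (b ⬝ᵥ g i)_i
  set f : (Fin B → ℝ) →ₗ[ℝ] (Fin B → ℝ) :=
    { toFun := fun b i => b ⬝ᵥ g i
      map_add' := by intro x y; funext i; simp [add_dotProduct]
      map_smul' := by intro c x; funext i; simp [smul_dotProduct] } with hf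
  have hinj : Function.Injective f := by
    rw [injective_iff_map_eq_zero]
    intro b hb
    have hbz : ∀ s ∈ S, b ⬝ᵥ s = 0 := by
      intro s hs
      obtain ⟨i, rfl⟩ := hsurj s hs
      exact congrFun hb i
    have hbmem : b ∈ Submodule.span ℝ (S : Set (Fin B → ℝ)) := by
      rw [hspanTop]; trivial
    have : b ⬝ᵥ b = 0 := by
      refine Submodule.span_induction (p := fun x _ => b ⬝ᵥ x = 0)
        (fun x hx => hbz x hx) (by simp) ?_ ?_ hbmem
      · intro x y _ _ hx hy; rw [dotProduct_add, hx, hy]; ring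
      · intro r x _ hx; rw [dotProduct_smul, hx]; simp
    exact (dotProduct_self_eq_zero).mp this
  have hsurjf : Function.Surjective f := (LinearMap.injective_iff_surjective).mp hinj
  -- solve for the perturbation direction
  obtain ⟨c, hc⟩ := hsurjf (fun i => if g i ∈ Y then (-1 : ℝ) else 0)
  have hcdot : ∀ s ∈ S, c ⬝ᵥ s = if s ∈ Y then (-1 : ℝ) else 0 := by
    intro s hs
    obtain ⟨i, rfl⟩ := hsurj s hs
    exact congrFun hc i
  set δ : ℝ := min (1/2) (ε / (‖c‖ + 1)) with hδ
  have hcpos : (0:ℝ) < ‖c‖ + 1 := by positivity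
  have hδpos : 0 < δ := lt_min (by norm_num) (by positivity)
  have hδle : δ ≤ 1/2 := min_le_left _ _
  set b : Fin B → ℝ := a + δ • c with hb
  have hbdot : ∀ s ∈ S, b ⬝ᵥ s = 1 + δ * (if s ∈ Y then (-1:ℝ) else 0) := by
    intro s hs
    rw [hb]
    rw [add_dotProduct, smul_dotProduct, hS1 s hs, hcdot s hs]
    simp [smul_eq_mul]
  refine ⟨Halfspace b (-1), ⟨b, ?_, ?_, rfl⟩, ?_⟩
  · -- b ≠ 0
    obtain ⟨s₀, hs₀⟩ := Finset.card_pos.mp (hcard ▸ hB)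
    intro hb0
    have h0 : b ⬝ᵥ s₀ = 0 := by rw [hb0]; simp
    have := hbdot s₀ hs₀
    rw [h0] at this
    by_cases hmem : s₀ ∈ Y <;> simp [hmem] at this <;> linarith
  · -- norm bound
    have : b - a = δ • c := by rw [hb]; abel
    rw [this, norm_smul, Real.norm_eq_abs, abs_of_pos hδpos]
    have h1 : δ ≤ ε / (‖c‖ + 1) := min_le_right _ _
    calc δ * ‖c‖ ≤ (ε / (‖c‖ + 1)) * ‖c‖ := by
          apply mul_le_mul_of_nonneg_right h1 (norm_nonneg _)
      _ < ε := by
          rw [div_mul_eq_mul_div, div_lt_iff₀ hcpos]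
          nlinarith [norm_nonneg c]
  · -- set equality
    ext x
    constructor
    · intro hx
      have hxS : x ∈ (S : Set (Fin B → ℝ)) := hY hx
      refine ⟨hxS, ?_⟩
      have := hbdot x hxS
      simp only [hx, if_pos] at this
      show b ⬝ᵥ x + (-1) < 0
      rw [this]; linarith
    · rintro ⟨hxS, hxH⟩
      by_contra hxY
      have := hbdot x hxS
      simp only [hxY, if_neg, not_false_iff] at this
      have hlt : b ⬝ᵥ x + (-1) < 0 := hxH
      rw [this] at hlt
      simp at hlt
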